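/- arXiv:2107.00714 — 5 statements merged into one kernel-verified Lean document; each statement's English description precedes it below -/
import Mathlib

section
/- Let A be a right-cancellative monoid, B ⊆ A a submonoid that is a group, and R a ring. Then the monoid algebra R[A] is a free module over R[B]. In particular the inclusion R[B] ⊆ R[A] is flat. -/
/-!
Since every element of `B` has an inverse in `B` and `A` is right cancellative, `B` acts freely
on `A` by left multiplication. Choosing a representative `xᵢ` of each orbit gives a bijection
`I × B → A`, `(i, b) ↦ b xᵢ`, so the elements `xᵢ` form an `R[B]`-basis of `R[A]`.
-/

open Function

namespace MonoidAlgebra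

variable {R M A ι : Type*} [Semiring R] [Monoid M] [Monoid A]

theorem free_of_bijective_mul (f : M →* A) (x : ι → A)
    (hx : Bijective fun p : ι × M => f p.2 * x p.1) :
    letI : Module R[M] R[A] := Module.compHom R[A] (mapDomainRingHom R f)
    Module.Free R[M] R[A] := by
  let _ : Module R[M] R[A] := Module.compHom R[A] (mapDomainRingHom R f)
  let E : (ι →₀ R[M]) ≃+ R[A] :=
    (Finsupp.mapRange.addEquiv coeffAddEquiv).trans <| Finsupp.curryAddEquiv.symm.trans <|
      (Finsupp.domCongr (Equiv.ofBijective _ hx)).trans coeffAddEquiv.symm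
  have hE : (Finsupp.linearCombination R[M] fun i => single (x i) (1 : R)).toAddMonoidHom =
      E.toAddMonoidHom := by
    refine Finsupp.addHom_ext fun i c => ?_
    induction c using MonoidAlgebra.induction_linear with
    | zero => simp only [Finsupp.single_zero, map_zero]
    | add c d hc hd => simp_all only [Finsupp.single_add, map_add]
    | single m r =>
      have hE_single : E (Finsupp.single i (single m r)) = single (f m * x i) r := by simp [E]
      simp only [LinearMap.toAddMonoidHom_coe, AddEquiv.toAddMonoidHom_eq_coe, AddMonoidHom.coe_coe,
        Finsupp.linearCombination_single, hE_single]
      change mapDomainRingHom R f (single m r) * single (x i) 1 = _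
      simp [single_mul_single]
  have hbij : Bijective (Finsupp.linearCombination R[M] fun i => single (x i) (1 : R)) :=
    congrArg DFunLike.coe hE ▸ E.bijective
  exact Module.Free.of_equiv (LinearEquiv.ofBijective _ hbij)

end MonoidAlgebra

namespace Submonoid

variable {A : Type*} [Monoid A] (B : Submonoid A) (hB : ∀ b : B, ∃ c : B, c * b = 1)

def leftOrbitSetoid : Setoid A where
  r a a' := ∃ b : B, (b : A) * a' = a
  iseqv.refl a := ⟨1, one_mul a⟩
  iseqv.symm := by
    rintro _ a' ⟨b, rfl⟩
    obtain ⟨c, hcb⟩ := hB b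
    exact ⟨c, by rw [← mul_assoc, ← coe_mul, hcb, coe_one, one_mul]⟩
  iseqv.trans := by
    rintro _ _ _ ⟨b, rfl⟩ ⟨c, rfl⟩
    exact ⟨b * c, by rw [coe_mul, mul_assoc]⟩

theorem bijective_mul_out [IsRightCancelMul A] :
    Bijective fun p : Quotient (B.leftOrbitSetoid hB) × B => (p.2 : A) * p.1.out := by
  let _ := B.leftOrbitSetoid hB
  constructor
  · rintro ⟨q, b⟩ ⟨q', b'⟩ (h : (b : A) * q.out = b' * q'.out)
    obtain ⟨c, hcb⟩ := hB b'
    have hq : q'.out ≈ q.out :=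
      ⟨c * b, by rw [coe_mul, mul_assoc, h, ← mul_assoc, ← coe_mul, hcb, coe_one, one_mul]⟩
    obtain rfl : q = q' := (Quotient.out_equiv_out.mp hq).symm
    exact Prod.ext rfl (Subtype.ext (mul_right_cancel h))
  · intro a
    obtain ⟨b, hb⟩ : a ≈ (⟦a⟧ : Quotient _).out := Setoid.symm (Quotient.mk_out a)
    exact ⟨(⟦a⟧, b), hb⟩

end Submonoid

theorem monoidAlgebra_free_over_subgroup
    {A : Type*} [Monoid A]
    (hA : ∀ x y z : A, x * z = y * z → x = y)  -- A is right cancellative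
    (B : Submonoid A)
    (hB : ∀ b : B, ∃ c : B, b * c = 1 ∧ c * b = 1)  -- B is a group
    (R : Type*) [CommRing R] :
    letI : Module (MonoidAlgebra R B) (MonoidAlgebra R A) :=
      Module.compHom (MonoidAlgebra R A) (MonoidAlgebra.mapDomainRingHom R B.subtype)
    Module.Free (MonoidAlgebra R B) (MonoidAlgebra R A) := by
  have : IsRightCancelMul A := ⟨fun a _ _ => hA _ _ a⟩
  exact MonoidAlgebra.free_of_bijective_mul B.subtype _
    (B.bijective_mul_out fun b => (hB b).imp fun _ => And.right)
end

section
/- Let X_*(T) be the cocharacter lattice with pairing against simple roots Δ, and for each α ∈ Δ choose λ_α ∈ X_*(T)_- with ⟨α, λ_α⟩ < 0 and ⟨β, λ_α⟩ = 0 for β ≠ α. Then for any standard Levi L (with simple roots Δ_L), the monoid algebra F_p[X_*(T)_{- /L}] of L-antidominant cocharacters equals the localization of F_p[X_*(T)_-] at the elements e^{λ_α}, α ∈ Δ∖Δ_L. In particular Spec F_p[X_*(T)_{- /L}] → Spec F_p[X_*(T)_-] is an open immersion. -/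
/-!
Let `σ = ∑_{α ∉ Δ_L} λ_α`. It is antidominant, it pairs to zero with every root of `Δ_L`, and
strictly negatively with every root outside `Δ_L`. Hence `e^σ` becomes a unit in
`F_p[X_*(T)_{−∕L}]`, and every `L`-antidominant `λ` becomes antidominant after adding a large
multiple of `σ`: so `F_p[X_*(T)_{−∕L}] = F_p[X_*(T)_-][e^{-σ}]`, and `Spec` of it is the basic open
`D(e^σ)`. Since `e^σ = ∏_{α ∉ Δ_L} e^{λ_α}` and each `e^{λ_α}` is already a unit there, inverting
all of them gives the same ring.
-/

open AlgebraicGeometry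

/-- `{λ ∈ X : ⟨α i, λ⟩ ≤ 0 for all i ∈ S}`; for `S = univ` this is `X_*(T)_-`,
for `S = Δ_L` this is `X_*(T)_{−∕L}`. -/
def antidomSubmonoid {X : Type} [AddCommGroup X] {ι : Type} (α : ι → X →+ ℤ)
    (S : Set ι) : AddSubmonoid X where
  carrier := {x | ∀ i ∈ S, α i x ≤ 0}
  zero_mem' := by intro i _; simp
  add_mem' := by
    intro a b ha hb i hi
    simpa [map_add] using add_nonpos (ha i hi) (hb i hi)

open AddMonoidAlgebra

section Inclusion

variable {R : Type*} [CommSemiring R] {G : Type*} [AddCommGroup G] {M N : AddSubmonoid G}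
  (h : M ≤ N)

theorem mapDomainRingHom_inclusion_injective :
    Function.Injective (mapDomainRingHom R (AddSubmonoid.inclusion h)) :=
  mapDomain_injective (AddSubmonoid.inclusion_injective h)

theorem isUnit_mapDomainRingHom_inclusion_single {m : M} (hm : -(m : G) ∈ N) :
    IsUnit (mapDomainRingHom R (AddSubmonoid.inclusion h) (single m 1)) := by
  refine IsUnit.of_mul_eq_one (single ⟨-(m : G), hm⟩ 1) ?_
  rw [mapDomainRingHom_apply, mapDomain_single, single_mul_single, mul_one,
    AddMonoidAlgebra.one_def]
  congr 1
  exact Subtype.ext (add_neg_cancel (m : G))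

theorem single_mul_mapDomainRingHom_inclusion_single_pow (s : M) (n : N) (b : R) (k : ℕ)
    (hk : (n : G) + k • (s : G) ∈ M) :
    single n b * mapDomainRingHom R (AddSubmonoid.inclusion h) (single s 1 ^ k) =
      mapDomainRingHom R (AddSubmonoid.inclusion h) (single ⟨_, hk⟩ b) := by
  rw [single_pow, one_pow, mapDomainRingHom_apply, mapDomainRingHom_apply, mapDomain_single,
    mapDomain_single, single_mul_single, mul_one]
  rfl

theorem exists_mul_pow_eq_mapDomainRingHom_inclusion (s : M)
    (habsorb : ∀ n : N, ∃ k : ℕ, (n : G) + k • (s : G) ∈ M) (z : R[N]) :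
    ∃ (r : R[M]) (k : ℕ),
      z * mapDomainRingHom R (AddSubmonoid.inclusion h) (single s 1 ^ k) =
        mapDomainRingHom R (AddSubmonoid.inclusion h) r := by
  induction z using AddMonoidAlgebra.induction with
  | zero => exact ⟨0, 0, by simp⟩
  | single_add n b z _ _ ih =>
    obtain ⟨r, l, hr⟩ := ih
    obtain ⟨k, hk⟩ := habsorb n
    refine ⟨single ⟨_, hk⟩ b * single s 1 ^ l + r * single s 1 ^ k, k + l, ?_⟩
    rw [map_add, map_mul, map_mul, ← hr,
      ← single_mul_mapDomainRingHom_inclusion_single_pow h s n b k hk, pow_add, map_mul]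
    ring

theorem isLocalization_away_mapDomainRingHom_inclusion (s : M) (hs : -(s : G) ∈ N)
    (habsorb : ∀ n : N, ∃ k : ℕ, (n : G) + k • (s : G) ∈ M) :
    letI := (mapDomainRingHom R (AddSubmonoid.inclusion h)).toAlgebra
    IsLocalization.Away (single s (1 : R)) R[N] := by
  let _ := (mapDomainRingHom R (AddSubmonoid.inclusion h)).toAlgebra
  refine (isLocalization_iff _ _).2 ⟨?_, fun z => ?_, fun hxy => ?_⟩
  · rintro ⟨_, k, rfl⟩
    exact map_pow (algebraMap R[M] R[N]) _ k ▸
      (isUnit_mapDomainRingHom_inclusion_single (R := R) h hs).pow k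
  · obtain ⟨r, k, hr⟩ := exists_mul_pow_eq_mapDomainRingHom_inclusion h s habsorb z
    exact ⟨(r, ⟨_, k, rfl⟩), hr⟩
  · exact ⟨1, by rw [mapDomainRingHom_inclusion_injective h hxy]⟩

theorem isLocalization_closure_mapDomainRingHom_inclusion {κ : Type*} (v : κ → M)
    (T : Finset κ) (hv : ∀ i ∈ T, -(v i : G) ∈ N)
    (habsorb : ∀ n : N, ∃ k : ℕ, (n : G) + k • ((∑ i ∈ T, v i : M) : G) ∈ M) :
    letI := (mapDomainRingHom R (AddSubmonoid.inclusion h)).toAlgebra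
    IsLocalization (Submonoid.closure ((fun i => single (v i) (1 : R)) '' T)) R[N] := by
  let _ := (mapDomainRingHom R (AddSubmonoid.inclusion h)).toAlgebra
  have hs : -((∑ i ∈ T, v i : M) : G) ∈ N := by
    rw [AddSubmonoid.coe_finsetSum, ← Finset.sum_neg_distrib]
    exact sum_mem hv
  have := isLocalization_away_mapDomainRingHom_inclusion (R := R) h _ hs habsorb
  refine IsLocalization.of_le (Submonoid.powers (single (∑ i ∈ T, v i) 1)) _ ?_ fun r hr => ?_
  · have hprod : ∏ i ∈ T, single (v i) (1 : R) = single (∑ i ∈ T, v i) 1 := by simp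
    rw [Submonoid.powers_le, ← hprod]
    exact Submonoid.prod_mem _ fun i hi => Submonoid.subset_closure ⟨i, hi, rfl⟩
  · induction hr using Submonoid.closure_induction with
    | mem _ hx =>
      obtain ⟨i, hi, rfl⟩ := hx
      exact isUnit_mapDomainRingHom_inclusion_single h (hv i hi)
    | one => exact isUnit_one.map _
    | mul _ _ _ _ hx hy => rw [map_mul]; exact hx.mul hy

end Inclusion

section Antidominant

variable {X : Type} [AddCommGroup X] {ι : Type} (α : ι → X →+ ℤ)

theorem neg_mem_antidomSubmonoid {S : Set ι} {x : X} (hx : ∀ i ∈ S, α i x = 0) :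
    -x ∈ antidomSubmonoid α S := fun i hi => by simp [hx i hi]

theorem map_sum_eq_ite_of_orthogonal [DecidableEq ι] {lam : ι → X}
    (horth : ∀ i j, j ≠ i → α j (lam i) = 0) (T : Finset ι) (j : ι) :
    α j (∑ i ∈ T, lam i) = if j ∈ T then α j (lam j) else 0 := by
  rw [map_sum]
  split_ifs with hj
  · exact Finset.sum_eq_single j (fun i _ hij => horth i j (Ne.symm hij)) (absurd hj)
  · exact Finset.sum_eq_zero fun i hi => horth i j (ne_of_mem_of_not_mem hi hj).symm

theorem exists_add_nsmul_mem_antidomSubmonoid_univ [Fintype ι] {S : Set ι} {σ : X}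
    (hσ : σ ∈ antidomSubmonoid α Set.univ) (hσS : ∀ i ∉ S, α i σ < 0)
    {x : X} (hx : x ∈ antidomSubmonoid α S) :
    ∃ k : ℕ, x + k • σ ∈ antidomSubmonoid α Set.univ := by
  refine ⟨Finset.univ.sup fun i => (α i x).toNat, fun i _ => ?_⟩
  have hk : α i x ≤ (Finset.univ.sup fun i => (α i x).toNat : ℕ) := (Int.self_le_toNat _).trans
    (by exact_mod_cast Finset.le_sup (f := fun i => (α i x).toNat) (Finset.mem_univ i))
  rw [map_add, map_nsmul, nsmul_eq_mul]
  by_cases hi : i ∈ S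
  · nlinarith [hx i hi, hσ i trivial]
  · nlinarith [hσS i hi]

end Antidominant

theorem levi_monoidAlgebra_isLocalization_general
    (p : ℕ)
    {X : Type} [AddCommGroup X] {ι : Type} [Fintype ι]
    (α : ι → X →+ ℤ)
    (ΔL : Set ι)
    (lam : ι → antidomSubmonoid α (Set.univ : Set ι))   -- the elements λα
    (hneg : ∀ i, α i (lam i : X) < 0)
    (horth : ∀ i j, j ≠ i → α j (lam i : X) = 0)
    (hle : antidomSubmonoid α (Set.univ : Set ι) ≤ antidomSubmonoid α ΔL) :
    letI φ : AddMonoidAlgebra (ZMod p) (antidomSubmonoid α (Set.univ : Set ι)) →+*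
        AddMonoidAlgebra (ZMod p) (antidomSubmonoid α ΔL) :=
      AddMonoidAlgebra.mapDomainRingHom (ZMod p) (AddSubmonoid.inclusion hle)
    letI : Algebra (AddMonoidAlgebra (ZMod p) (antidomSubmonoid α (Set.univ : Set ι)))
        (AddMonoidAlgebra (ZMod p) (antidomSubmonoid α ΔL)) := φ.toAlgebra
    IsLocalization
      (Submonoid.closure
        ((fun i => AddMonoidAlgebra.single (lam i) (1 : ZMod p)) '' ΔLᶜ))
      (AddMonoidAlgebra (ZMod p) (antidomSubmonoid α ΔL)) ∧
    IsOpenImmersion (Spec.map (CommRingCat.ofHom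
      (AddMonoidAlgebra.mapDomainRingHom (ZMod p) (AddSubmonoid.inclusion hle)))) := by
  let _ := (mapDomainRingHom (ZMod p) (AddSubmonoid.inclusion hle)).toAlgebra
  classical
  let σ : antidomSubmonoid α Set.univ := ∑ i ∈ ΔLᶜ.toFinset, lam i
  have hσ (j : ι) : α j σ = if j ∈ ΔL then 0 else α j (lam j) := by
    by_cases hj : j ∈ ΔL <;> simp [σ, map_sum_eq_ite_of_orthogonal α horth, hj]
  have hσ_neg : -(σ : X) ∈ antidomSubmonoid α ΔL :=
    neg_mem_antidomSubmonoid α fun j hj => by rw [hσ, if_pos hj]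
  have habsorb (x : antidomSubmonoid α ΔL) : ∃ k : ℕ, (x : X) + k • (σ : X) ∈ _ :=
    exists_add_nsmul_mem_antidomSubmonoid_univ α σ.2
      (fun i hi => by rw [hσ, if_neg hi]; exact hneg i) x.2
  have := isLocalization_away_mapDomainRingHom_inclusion (R := ZMod p) hle σ hσ_neg habsorb
  refine ⟨?_, IsOpenImmersion.of_isLocalization (single σ 1)⟩
  rw [← Set.coe_toFinset ΔLᶜ]
  refine isLocalization_closure_mapDomainRingHom_inclusion hle lam _ (fun i hi => ?_) habsorb
  have hi : i ∉ ΔL := by simpa using hi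
  exact neg_mem_antidomSubmonoid α fun j hj => horth i j fun hji => hi (hji ▸ hj)

theorem levi_monoidAlgebra_isLocalization
    (p : ℕ) [Fact p.Prime]
    {X : Type} [AddCommGroup X] {ι : Type} [Fintype ι]
    (α : ι → X →+ ℤ)
    (ΔL : Set ι)
    (lam : ι → antidomSubmonoid α (Set.univ : Set ι))   -- the elements λα
    (hneg : ∀ i, α i (lam i : X) < 0)
    (horth : ∀ i j, j ≠ i → α j (lam i : X) = 0)
    (hle : antidomSubmonoid α (Set.univ : Set ι) ≤ antidomSubmonoid α ΔL) :
    letI φ : AddMonoidAlgebra (ZMod p) (antidomSubmonoid α (Set.univ : Set ι)) →+*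
        AddMonoidAlgebra (ZMod p) (antidomSubmonoid α ΔL) :=
      AddMonoidAlgebra.mapDomainRingHom (ZMod p) (AddSubmonoid.inclusion hle)
    letI : Algebra (AddMonoidAlgebra (ZMod p) (antidomSubmonoid α (Set.univ : Set ι)))
        (AddMonoidAlgebra (ZMod p) (antidomSubmonoid α ΔL)) := φ.toAlgebra
    IsLocalization
      (Submonoid.closure
        ((fun i => AddMonoidAlgebra.single (lam i) (1 : ZMod p)) '' ΔLᶜ))
      (AddMonoidAlgebra (ZMod p) (antidomSubmonoid α ΔL)) ∧
    IsOpenImmersion (Spec.map (CommRingCat.ofHom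
      (AddMonoidAlgebra.mapDomainRingHom (ZMod p) (AddSubmonoid.inclusion hle)))) :=
  levi_monoidAlgebra_isLocalization_general p α ΔL lam hneg horth hle
end

section
/- With λ_α as above, in the monoid algebra F_p[X_*(T)_-] one has the inclusions of ideals (e^{λ_α} : α ∈ Δ) ⊆ (e^λ : λ ∈ X_*(T)_-∖Δ^⊥) ⊆ √(e^{λ_α} : α ∈ Δ); in particular these two ideals have the same radical. -/
theorem AddMonoidAlgebra.single_one_mem_radical_of_nsmul_eq_add {R M : Type*} [CommSemiring R]
    [AddCommMonoid M] {I : Ideal (AddMonoidAlgebra R M)} {m μ ν : M} {n : ℕ}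
    (h : n • m = ν + μ) (hμ : single μ (1 : R) ∈ I) : single m (1 : R) ∈ I.radical := by
  refine ⟨n, ?_⟩
  rw [single_pow, one_pow, h, ← one_mul (1 : R), ← single_mul_single]
  exact I.mul_mem_left _ hμ

theorem exists_nsmul_eq_add_of_apply_neg {X ι : Type} [AddCommGroup X] {α : ι → X →+ ℤ}
    {S : Set ι} {lam m : antidomSubmonoid α S} {i : ι} (hlam : α i lam < 0)
    (horth : ∀ j ∈ S, j ≠ i → α j lam = 0) (hm : α i m < 0) :
    ∃ (n : ℕ) (ν : antidomSubmonoid α S), n • m = ν + lam := by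
  obtain ⟨n, hn⟩ : ∃ n : ℕ, (n : ℤ) = -α i lam := ⟨_, Int.toNat_of_nonneg (by omega)⟩
  have hν : n • (m : X) - lam ∈ antidomSubmonoid α S := by
    intro j hj
    have hmj : α j m ≤ 0 := m.2 j hj
    simp only [map_sub, map_nsmul, nsmul_eq_mul]
    rcases eq_or_ne j i with rfl | hji
    · nlinarith
    · rw [horth j hj hji]
      nlinarith
  exact ⟨n, ⟨_, hν⟩, Subtype.ext (by simp)⟩

theorem supersingular_ideal_radical_general
    (p : ℕ)
    {X : Type} [AddCommGroup X] {ι : Type}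
    (α : ι → X →+ ℤ)
    (lam : ι → antidomSubmonoid α (Set.univ : Set ι))   -- the elements λα
    (hneg : ∀ i, α i (lam i : X) < 0)
    (horth : ∀ i j, j ≠ i → α j (lam i : X) = 0) :
    letI I₁ : Ideal (AddMonoidAlgebra (ZMod p) (antidomSubmonoid α (Set.univ : Set ι))) :=
      Ideal.span (Set.range fun i => AddMonoidAlgebra.single (lam i) (1 : ZMod p))
    letI I₂ : Ideal (AddMonoidAlgebra (ZMod p) (antidomSubmonoid α (Set.univ : Set ι))) :=
      Ideal.span {x | ∃ m : antidomSubmonoid α (Set.univ : Set ι),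
        (¬ ∀ i, α i (m : X) = 0) ∧ x = AddMonoidAlgebra.single m (1 : ZMod p)}
    I₁ ≤ I₂ ∧ I₂ ≤ I₁.radical ∧ I₁.radical = I₂.radical := by
  refine (fun h12 h2r => ⟨h12, h2r, (Ideal.radical_mono h12).antisymm
    (Ideal.radical_le_radical_iff.2 h2r)⟩) (Ideal.span_le.2 ?_) (Ideal.span_le.2 ?_)
  · rintro _ ⟨i, rfl⟩
    exact Ideal.subset_span ⟨lam i, fun h => (hneg i).ne (h i), rfl⟩
  · rintro _ ⟨m, hm, rfl⟩
    obtain ⟨i, hi⟩ := not_forall.mp hm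
    obtain ⟨n, ν, h⟩ := exists_nsmul_eq_add_of_apply_neg (hneg i) (fun j _ => horth i j)
      ((m.2 i (Set.mem_univ i)).lt_of_ne hi)
    exact AddMonoidAlgebra.single_one_mem_radical_of_nsmul_eq_add h (Ideal.subset_span ⟨i, rfl⟩)

theorem supersingular_ideal_radical
    (p : ℕ) [Fact p.Prime]
    {X : Type} [AddCommGroup X] {ι : Type} [Fintype ι]
    (α : ι → X →+ ℤ)
    (lam : ι → antidomSubmonoid α (Set.univ : Set ι))   -- the elements λα
    (hneg : ∀ i, α i (lam i : X) < 0)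
    (horth : ∀ i j, j ≠ i → α j (lam i : X) = 0) :
    letI I₁ : Ideal (AddMonoidAlgebra (ZMod p) (antidomSubmonoid α (Set.univ : Set ι))) :=
      Ideal.span (Set.range fun i => AddMonoidAlgebra.single (lam i) (1 : ZMod p))
    letI I₂ : Ideal (AddMonoidAlgebra (ZMod p) (antidomSubmonoid α (Set.univ : Set ι))) :=
      Ideal.span {x | ∃ m : antidomSubmonoid α (Set.univ : Set ι),
        (¬ ∀ i, α i (m : X) = 0) ∧ x = AddMonoidAlgebra.single m (1 : ZMod p)}
    I₁ ≤ I₂ ∧ I₂ ≤ I₁.radical ∧ I₁.radical = I₂.radical :=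
  supersingular_ideal_radical_general p α lam hneg horth
end

section
/- The image of f_L := e^{Σ_{α∈Δ∖Δ_L} λ_α} in the quotient ring F_p[X_*(T)_-]/(e^{λ_β} : β ∈ Δ_L) is a regular (non-zero-divisor) element. -/
/-!
Membership in an ideal generated by monomials `e^{λ_j}` is detected on supports: every exponent
in the support must be of the form `d + λ_j` with `d` antidominant. Multiplication by the
monomial `f_L = e^{μ}` shifts supports by `μ`, so it remains to see that `μ + x = d + λ_j`
with `j ∈ Δ_L` forces `x - λ_j` to be antidominant. At `α_j` this holds because
`⟨α_j, μ⟩ = 0`, as `μ` is a sum of `λ_i` with `i ∉ Δ_L`; at every other simple root it holds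
because `⟨α_i, λ_j⟩ = 0`.
-/

namespace AddMonoidAlgebra

theorem mem_ideal_span_of'_image_of_single_mul_mem {k A : Type*} [Semiring k] [AddMonoid A]
    [IsLeftCancelAdd A] {s : Set A} {μ : A}
    (hμ : ∀ x d, ∀ m ∈ s, μ + x = d + m → ∃ m' ∈ s, ∃ d', x = d' + m')
    {a : AddMonoidAlgebra k A} (ha : single μ 1 * a ∈ Ideal.span (of' k A '' s)) :
    a ∈ Ideal.span (of' k A '' s) := by
  rw [mem_ideal_span_of'_image] at ha ⊢
  intro x hx
  have hμx : μ + x ∈ (single μ 1 * a).coeff.support := by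
    rw [support_coeff_single_mul _ _ (by simp)]
    exact Finset.mem_map_of_mem _ hx
  obtain ⟨m, hm, d, h⟩ := ha _ hμx
  exact hμ x d m hm h

end AddMonoidAlgebra

namespace antidomSubmonoid

variable {X : Type} [AddCommGroup X] {ι : Type} {α : ι → X →+ ℤ}

theorem exists_eq_add_of_add_eq {μ ν x d : antidomSubmonoid α Set.univ} {j : ι}
    (hν : ∀ i, i ≠ j → α i (ν : X) = 0) (hμ : α j (μ : X) = 0) (h : μ + x = d + ν) :
    ∃ d', x = d' + ν := by
  refine ⟨⟨(x : X) - ν, fun i _ => ?_⟩, Subtype.ext (by simp)⟩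
  rw [map_sub]
  by_cases hij : i = j
  · subst hij
    have hX := congrArg (fun y : antidomSubmonoid α Set.univ => α i (y : X)) h
    simp only [AddSubmonoid.coe_add, map_add, hμ] at hX
    linarith [d.2 i trivial]
  · rw [hν i hij, sub_zero]
    exact x.2 i trivial

end antidomSubmonoid

theorem fL_regular_mod_levi_ideal_general
    (p : ℕ)
    {X : Type} [AddCommGroup X] {ι : Type} [Fintype ι] [DecidableEq ι]
    (α : ι → X →+ ℤ)
    (ΔL : Finset ι)
    (lam : ι → antidomSubmonoid α (Set.univ : Set ι))   -- the elements λα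
    (horth : ∀ i j, j ≠ i → α j (lam i : X) = 0) :
    letI J : Ideal (AddMonoidAlgebra (ZMod p) (antidomSubmonoid α (Set.univ : Set ι))) :=
      Ideal.span ((fun j => AddMonoidAlgebra.single (lam j) (1 : ZMod p)) '' (ΔL : Set ι))
    letI fL : AddMonoidAlgebra (ZMod p) (antidomSubmonoid α (Set.univ : Set ι)) :=
      AddMonoidAlgebra.single (∑ i ∈ ΔLᶜ, lam i) (1 : ZMod p)
    ∀ a, fL * a ∈ J → a ∈ J := by
  intro a ha
  have hα : ∀ j ∈ ΔL, α j ((∑ i ∈ ΔLᶜ, lam i : antidomSubmonoid α Set.univ) : X) = 0 := by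
    intro j hj
    rw [AddSubmonoid.coe_finsetSum, map_sum]
    exact Finset.sum_eq_zero fun i hi => horth i j fun h => Finset.mem_compl.mp hi (h ▸ hj)
  have hJ : (fun j => AddMonoidAlgebra.single (lam j) (1 : ZMod p)) '' (ΔL : Set ι) =
      AddMonoidAlgebra.of' _ _ '' (lam '' ΔL) := by
    rw [Set.image_image]; rfl
  rw [hJ] at ha ⊢
  refine AddMonoidAlgebra.mem_ideal_span_of'_image_of_single_mul_mem ?_ ha
  rintro x d _ ⟨j, hj, rfl⟩ h
  exact ⟨lam j, ⟨j, hj, rfl⟩, antidomSubmonoid.exists_eq_add_of_add_eq (horth j) (hα j hj) h⟩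

theorem fL_regular_mod_levi_ideal
    (p : ℕ) [Fact p.Prime]
    {X : Type} [AddCommGroup X] {ι : Type} [Fintype ι] [DecidableEq ι]
    (α : ι → X →+ ℤ)
    (ΔL : Finset ι)
    (lam : ι → antidomSubmonoid α (Set.univ : Set ι))   -- the elements λα
    (hneg : ∀ i, α i (lam i : X) < 0)
    (horth : ∀ i j, j ≠ i → α j (lam i : X) = 0) :
    letI J : Ideal (AddMonoidAlgebra (ZMod p) (antidomSubmonoid α (Set.univ : Set ι))) :=
      Ideal.span ((fun j => AddMonoidAlgebra.single (lam j) (1 : ZMod p)) '' (ΔL : Set ι))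
    letI fL : AddMonoidAlgebra (ZMod p) (antidomSubmonoid α (Set.univ : Set ι)) :=
      AddMonoidAlgebra.single (∑ i ∈ ΔLᶜ, lam i) (1 : ZMod p)
    ∀ a, fL * a ∈ J → a ∈ J :=
  fL_regular_mod_levi_ideal_general p α ΔL lam horth
end

section
/- For standard Levi subgroups L, L' of G with simple-root subsets Δ_L, Δ_{L'} ⊆ Δ, the intersection of the open sub-monoid-schemes D(X_*(T)_{- /L}) and D(X_*(T)_{- /L'}) inside D(X_*(T)_-) equals D(X_*(T)_{- /L''}) where Δ_{L''} = Δ_L ∩ Δ_{L'}. At the level of monoids: X_*(T)_{- /L} + X_*(T)_{- /L'} generate, and a monoid homomorphism s : X_*(T)_- → (k,·) extends to both X_*(T)_{- /L} and X_*(T)_{- /L'} iff it extends to X_*(T)_{- /L''}. -/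
section Extension

variable {k : Type*} {X : Type*} [AddCommGroup X] {M N : AddSubmonoid X}

def ExtendsTo [Mul k] [One k] (hMN : M ≤ N) (s : M → k) : Prop :=
  ∃ t : N → k, t 0 = 1 ∧ (∀ a b, t (a + b) = t a * t b) ∧
    ∀ m, t (AddSubmonoid.inclusion hMN m) = s m

theorem apply_nsmul_eq_pow [Monoid k] (s : M → k) (hs0 : s 0 = 1)
    (hsadd : ∀ a b, s (a + b) = s a * s b) (n : ℕ) (a : M) : s (n • a) = s a ^ n := by
  induction n with
  | zero => simpa using hs0
  | succ n ih => rw [succ_nsmul, hsadd, ih, pow_succ]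

theorem apply_sum_eq_prod [CommMonoid k] {ι : Type*} (s : M → k) (hs0 : s 0 = 1)
    (hsadd : ∀ a b, s (a + b) = s a * s b) (T : Finset ι) (g : ι → M) :
    s (∑ i ∈ T, g i) = ∏ i ∈ T, s (g i) := by
  classical
  induction T using Finset.induction with
  | empty => simpa using hs0
  | insert _ _ h ih => rw [Finset.sum_insert h, hsadd, ih, Finset.prod_insert h]

theorem ExtendsTo.apply_ne_zero [MonoidWithZero k] [Nontrivial k] {hMN : M ≤ N} {s : M → k}
    (hs : ExtendsTo hMN s) {l : M} (hl : -(l : X) ∈ N) : s l ≠ 0 := by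
  obtain ⟨t, ht0, htadd, hts⟩ := hs
  intro hl0
  have hinv : AddSubmonoid.inclusion hMN l + ⟨-(l : X), hl⟩ = 0 := Subtype.ext (add_neg_cancel _)
  have ht := congrArg t hinv
  rw [htadd, hts, hl0, zero_mul, ht0] at ht
  exact zero_ne_one ht

variable [CommGroupWithZero k]

noncomputable def extendAlong (l : M) (hgen : ∀ x : N, ∃ n : ℕ, (x : X) + n • (l : X) ∈ M)
    (s : M → k) (x : N) : k :=
  s ⟨x + (hgen x).choose • l, (hgen x).choose_spec⟩ / s l ^ (hgen x).choose

theorem extendAlong_eq {l : M} {hgen : ∀ x : N, ∃ n : ℕ, (x : X) + n • (l : X) ∈ M}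
    {s : M → k} (hs0 : s 0 = 1) (hsadd : ∀ a b, s (a + b) = s a * s b) (hl : s l ≠ 0)
    {x : N} {y : M} {n : ℕ} (h : (x : X) + n • (l : X) = y) :
    extendAlong l hgen s x = s y / s l ^ n := by
  set c := (hgen x).choose
  set y' : M := ⟨x + c • l, (hgen x).choose_spec⟩
  have hy : y' + n • l = y + c • l := Subtype.ext <| by
    push_cast [y', ← h]
    abel
  have hs := congrArg s hy
  rw [hsadd, hsadd, apply_nsmul_eq_pow s hs0 hsadd, apply_nsmul_eq_pow s hs0 hsadd] at hs
  rw [extendAlong, div_eq_div_iff (pow_ne_zero _ hl) (pow_ne_zero _ hl)]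
  exact hs

theorem extendsTo_iff_apply_ne_zero (hMN : M ≤ N) (l : M) (hl : -(l : X) ∈ N)
    (hgen : ∀ x : N, ∃ n : ℕ, (x : X) + n • (l : X) ∈ M) (s : M → k) (hs0 : s 0 = 1)
    (hsadd : ∀ a b, s (a + b) = s a * s b) : ExtendsTo hMN s ↔ s l ≠ 0 := by
  refine ⟨fun hs => hs.apply_ne_zero hl, fun hl0 => ?_⟩
  have hext {x : N} {y : M} {n : ℕ} (h : (x : X) + n • (l : X) = y) :
      extendAlong l hgen s x = s y / s l ^ n :=
    extendAlong_eq hs0 hsadd hl0 h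
  refine ⟨extendAlong l hgen s, ?_, fun a b => ?_, fun m => ?_⟩
  · rw [hext (y := 0) (n := 0) (by simp), hs0, pow_zero, div_one]
  · obtain ⟨na, ha⟩ := hgen a
    obtain ⟨nb, hb⟩ := hgen b
    rw [hext (y := ⟨_, ha⟩) rfl, hext (y := ⟨_, hb⟩) rfl,
      hext (y := ⟨_, ha⟩ + ⟨_, hb⟩) (n := na + nb) (by push_cast [add_nsmul]; abel),
      hsadd, pow_add, mul_div_mul_comm]
  · rw [hext (y := m) (n := 0) (by simp), pow_zero, div_one]

end Extension

section Coweights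

variable {X : Type} [AddCommGroup X] {ι : Type} [DecidableEq ι]
  (α : ι → X →+ ℤ) (lam : ι → antidomSubmonoid α Set.univ)

theorem apply_sum_lam (horth : ∀ i j, j ≠ i → α j (lam i : X) = 0) (T : Finset ι) (j : ι) :
    α j (∑ i ∈ T, (lam i : X)) = if j ∈ T then α j (lam j : X) else 0 := by
  rw [map_sum, ← Finset.sum_ite_eq' T j (fun i => α j (lam i : X))]
  refine Finset.sum_congr rfl fun i _ => ?_
  split_ifs with h
  · rw [h]
  · exact horth i j (Ne.symm h)

theorem neg_sum_lam_compl_mem [Fintype ι] (horth : ∀ i j, j ≠ i → α j (lam i : X) = 0)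
    (S : Finset ι) :
    -∑ i ∈ Sᶜ, (lam i : X) ∈ antidomSubmonoid α S := by
  intro j hj
  rw [map_neg, apply_sum_lam α lam horth, if_neg (Finset.notMem_compl.2 hj), neg_zero]

theorem exists_add_nsmul_sum_lam_compl_mem [Fintype ι] (hneg : ∀ i, α i (lam i : X) < 0)
    (horth : ∀ i j, j ≠ i → α j (lam i : X) = 0) (S : Finset ι) (x : antidomSubmonoid α S) :
    ∃ n : ℕ, (x : X) + n • ∑ i ∈ Sᶜ, (lam i : X) ∈ antidomSubmonoid α Set.univ := by
  refine ⟨∑ j, (α j x).toNat, fun i _ => ?_⟩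
  have hbound : α i x ≤ ((∑ j, (α j x).toNat : ℕ) : ℤ) :=
    (Int.self_le_toNat _).trans <| by
      exact_mod_cast Finset.single_le_sum (f := fun j => (α j x).toNat)
        (fun j _ => Nat.zero_le _) (Finset.mem_univ i)
  rw [map_add, map_nsmul, apply_sum_lam α lam horth, nsmul_eq_mul]
  split_ifs with hi
  · nlinarith [hneg i]
  · simpa using x.2 i (Finset.notMem_compl.1 hi)

theorem extendsTo_iff_forall_apply_ne_zero [Fintype ι] {k : Type*} [CommGroupWithZero k]
    (hneg : ∀ i, α i (lam i : X) < 0) (horth : ∀ i j, j ≠ i → α j (lam i : X) = 0)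
    (S : Finset ι) (hle : antidomSubmonoid α Set.univ ≤ antidomSubmonoid α S)
    (s : antidomSubmonoid α Set.univ → k) (hs0 : s 0 = 1)
    (hsadd : ∀ a b, s (a + b) = s a * s b) :
    ExtendsTo hle s ↔ ∀ i ∈ Sᶜ, s (lam i) ≠ 0 := by
  rw [extendsTo_iff_apply_ne_zero hle (∑ i ∈ Sᶜ, lam i) ?_ ?_ s hs0 hsadd,
    apply_sum_eq_prod s hs0 hsadd, Finset.prod_ne_zero_iff]
  · simpa using neg_sum_lam_compl_mem α lam horth S
  · simpa using exists_add_nsmul_sum_lam_compl_mem α lam hneg horth S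

end Coweights

theorem PrimeSpectrum.basicOpen_prod {R ι : Type*} [CommSemiring R] (T : Finset ι) (f : ι → R) :
    basicOpen (∏ i ∈ T, f i) = T.inf fun i => basicOpen (f i) := by
  classical
  induction T using Finset.induction with
  | empty => simp [basicOpen_one]
  | insert _ _ h ih => rw [Finset.prod_insert h, basicOpen_mul, ih, Finset.inf_insert]

theorem PrimeSpectrum.basicOpen_single_sum {R G ι : Type*} [CommSemiring R] [AddCommMonoid G]
    (T : Finset ι) (g : ι → G) :
    basicOpen (AddMonoidAlgebra.single (∑ i ∈ T, g i) (1 : R)) =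
      T.inf fun i => basicOpen (AddMonoidAlgebra.single (g i) (1 : R)) := by
  rw [← basicOpen_prod, AddMonoidAlgebra.prod_single, Finset.prod_const_one]

theorem levi_open_subschemes_intersection_general
    (p : ℕ)
    {k : Type} [Field k]
    {X : Type} [AddCommGroup X] {ι : Type} [Fintype ι] [DecidableEq ι]
    (α : ι → X →+ ℤ)
    (ΔL ΔL' : Finset ι)
    (lam : ι → antidomSubmonoid α (Set.univ : Set ι))   -- the elements λα
    (hneg : ∀ i, α i (lam i : X) < 0)
    (horth : ∀ i j, j ≠ i → α j (lam i : X) = 0)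
    (hle : ∀ S : Set ι, antidomSubmonoid α (Set.univ : Set ι) ≤ antidomSubmonoid α S)
    -- a `k`-point of `D(X_*(T)_-)`, i.e. a monoid homomorphism `X_*(T)_- → (k,·)`:
    (s : antidomSubmonoid α (Set.univ : Set ι) → k)
    (hs0 : s 0 = 1) (hsadd : ∀ a b, s (a + b) = s a * s b) :
    -- (1) `s` extends to both `X_*(T)_{−∕L}` and `X_*(T)_{−∕L'}` iff it extends to
    --     `X_*(T)_{−∕L''}`, `Δ_{L''} = Δ_L ∩ Δ_{L'}`:
    (((∃ t : antidomSubmonoid α (↑ΔL : Set ι) → k, t 0 = 1 ∧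
          (∀ a b, t (a + b) = t a * t b) ∧
          ∀ m, t (AddSubmonoid.inclusion (hle _) m) = s m) ∧
        (∃ t : antidomSubmonoid α (↑ΔL' : Set ι) → k, t 0 = 1 ∧
          (∀ a b, t (a + b) = t a * t b) ∧
          ∀ m, t (AddSubmonoid.inclusion (hle _) m) = s m)) ↔
      (∃ t : antidomSubmonoid α (↑(ΔL ∩ ΔL') : Set ι) → k, t 0 = 1 ∧
          (∀ a b, t (a + b) = t a * t b) ∧
          ∀ m, t (AddSubmonoid.inclusion (hle _) m) = s m)) ∧
    -- (2) the corresponding open subsets of `Spec F_p[X_*(T)_-]` agree: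
    (PrimeSpectrum.basicOpen
        (AddMonoidAlgebra.single (∑ i ∈ ΔLᶜ, lam i) (1 : ZMod p)) ⊓
      PrimeSpectrum.basicOpen
        (AddMonoidAlgebra.single (∑ i ∈ ΔL'ᶜ, lam i) (1 : ZMod p)) =
      PrimeSpectrum.basicOpen
        (AddMonoidAlgebra.single (∑ i ∈ (ΔL ∩ ΔL')ᶜ, lam i) (1 : ZMod p))) := by
  have hext (S : Finset ι) :=
    extendsTo_iff_forall_apply_ne_zero α lam hneg horth S (hle _) s hs0 hsadd
  constructor
  · change ExtendsTo (hle _) s ∧ ExtendsTo (hle _) s ↔ ExtendsTo (hle _) s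
    rw [hext, hext, hext, Finset.compl_inter]
    simp only [Finset.mem_union, or_imp, forall_and]
  · simp only [PrimeSpectrum.basicOpen_single_sum, Finset.compl_inter, Finset.inf_union]

theorem levi_open_subschemes_intersection
    (p : ℕ) [Fact p.Prime]
    {k : Type} [Field k]
    {X : Type} [AddCommGroup X] {ι : Type} [Fintype ι] [DecidableEq ι]
    (α : ι → X →+ ℤ)
    (ΔL ΔL' : Finset ι)
    (lam : ι → antidomSubmonoid α (Set.univ : Set ι))   -- the elements λα
    (hneg : ∀ i, α i (lam i : X) < 0)
    (horth : ∀ i j, j ≠ i → α j (lam i : X) = 0)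
    (hle : ∀ S : Set ι, antidomSubmonoid α (Set.univ : Set ι) ≤ antidomSubmonoid α S)
    -- a `k`-point of `D(X_*(T)_-)`, i.e. a monoid homomorphism `X_*(T)_- → (k,·)`:
    (s : antidomSubmonoid α (Set.univ : Set ι) → k)
    (hs0 : s 0 = 1) (hsadd : ∀ a b, s (a + b) = s a * s b) :
    -- (1) `s` extends to both `X_*(T)_{−∕L}` and `X_*(T)_{−∕L'}` iff it extends to
    --     `X_*(T)_{−∕L''}`, `Δ_{L''} = Δ_L ∩ Δ_{L'}`:
    (((∃ t : antidomSubmonoid α (↑ΔL : Set ι) → k, t 0 = 1 ∧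
          (∀ a b, t (a + b) = t a * t b) ∧
          ∀ m, t (AddSubmonoid.inclusion (hle _) m) = s m) ∧
        (∃ t : antidomSubmonoid α (↑ΔL' : Set ι) → k, t 0 = 1 ∧
          (∀ a b, t (a + b) = t a * t b) ∧
          ∀ m, t (AddSubmonoid.inclusion (hle _) m) = s m)) ↔
      (∃ t : antidomSubmonoid α (↑(ΔL ∩ ΔL') : Set ι) → k, t 0 = 1 ∧
          (∀ a b, t (a + b) = t a * t b) ∧
          ∀ m, t (AddSubmonoid.inclusion (hle _) m) = s m)) ∧
    -- (2) the corresponding open subsets of `Spec F_p[X_*(T)_-]` agree: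
    (PrimeSpectrum.basicOpen
        (AddMonoidAlgebra.single (∑ i ∈ ΔLᶜ, lam i) (1 : ZMod p)) ⊓
      PrimeSpectrum.basicOpen
        (AddMonoidAlgebra.single (∑ i ∈ ΔL'ᶜ, lam i) (1 : ZMod p)) =
      PrimeSpectrum.basicOpen
        (AddMonoidAlgebra.single (∑ i ∈ (ΔL ∩ ΔL')ᶜ, lam i) (1 : ZMod p))) :=
  levi_open_subschemes_intersection_general p α ΔL ΔL' lam hneg horth hle s hs0 hsadd
end
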